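/- Let ψ, φ : ℝ³ → ℝ be smooth functions and define on smooth functions the bracket {f,g}(x) = ψ(x) · ⟨∇φ(x), ∇f(x) × ∇g(x)⟩. Then this bracket satisfies the Jacobi identity: {{f,g},h} + {{g,h},f} + {{h,f},g} = 0 for all smooth f,g,h : ℝ³ → ℝ. Thus every Poisson vector of the form P = ψ∇φ defines a Poisson structure on ℝ³. -/

import Mathlib

open scoped ContDiff

noncomputable section

/-- Partial derivative in the `i`-th coordinate direction. -/
def pd (i : Fin 3) (f : (Fin 3 → ℝ) → ℝ) : (Fin 3 → ℝ) → ℝ :=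
  fun x => fderiv ℝ f x (Pi.single i 1)

/-- Gradient of a function on ℝ³. -/
def grad (f : (Fin 3 → ℝ) → ℝ) (x : Fin 3 → ℝ) : Fin 3 → ℝ :=
  fun i => pd i f x

/-- Cross product on ℝ³. -/
def cross (u v : Fin 3 → ℝ) : Fin 3 → ℝ :=
  ![u 1 * v 2 - u 2 * v 1, u 2 * v 0 - u 0 * v 2, u 0 * v 1 - u 1 * v 0]

/-- Euclidean inner product on ℝ³. -/
def dot (u v : Fin 3 → ℝ) : ℝ := ∑ i, u i * v i

/-- The bracket {f,g}(x) = ψ(x)·⟨∇φ(x), ∇f(x) × ∇g(x)⟩ of the Poisson vector ψ∇φ. -/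
def pb (ψ φ f g : (Fin 3 → ℝ) → ℝ) : (Fin 3 → ℝ) → ℝ :=
  fun x => ψ x * dot (grad φ x) (cross (grad f x) (grad g x))

/-!
Write `{f,g} = ψ · J(f,g)` with `J(f,g) = ⟨∇φ, ∇f × ∇g⟩`. As `J(·,h)` is a derivation,
`{{f,g},h} = ψ² J(J(f,g),h) + ψ J(f,g) J(ψ,h)`. The cyclic sum of the first terms is the
Jacobiator of `J`, the bracket of the curl-free Poisson vector `∇φ`; it vanishes by symmetry of
second derivatives. The cyclic sum of the second terms is pointwise linear algebra: it equals
`[∇f,∇g,∇h] ⟨∇φ, ∇φ × ∇ψ⟩ = 0`.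
-/

def triple (u v w : Fin 3 → ℝ) : ℝ := dot u (cross v w)

lemma triple_eq (u v w : Fin 3 → ℝ) :
    triple u v w = u 0 * (v 1 * w 2 - v 2 * w 1) + u 1 * (v 2 * w 0 - v 0 * w 2)
      + u 2 * (v 0 * w 1 - v 1 * w 0) := by
  simp [triple, dot, cross, Fin.sum_univ_three]

/-- Dot `[a,p,q] r + [a,q,r] p + [a,r,p] q = [p,q,r] a` with `a × u`, which is orthogonal to `a`. -/
lemma triple_mul_triple_add_cyclic (a p q r u : Fin 3 → ℝ) :
    triple a p q * triple a u r + triple a q r * triple a u p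
      + triple a r p * triple a u q = 0 := by
  simp only [triple_eq]
  ring

section pd

variable {f g : (Fin 3 → ℝ) → ℝ} {x : Fin 3 → ℝ} (i : Fin 3)

lemma pd_fun_mul (hf : DifferentiableAt ℝ f x) (hg : DifferentiableAt ℝ g x) :
    pd i (fun y => f y * g y) x = pd i f x * g x + f x * pd i g x := by
  simp only [pd, fderiv_fun_mul hf hg, add_apply, smul_apply, smul_eq_mul]
  ring

lemma pd_fun_add (hf : DifferentiableAt ℝ f x) (hg : DifferentiableAt ℝ g x) :
    pd i (fun y => f y + g y) x = pd i f x + pd i g x := by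
  simp [pd, fderiv_fun_add hf hg]

lemma pd_fun_sub (hf : DifferentiableAt ℝ f x) (hg : DifferentiableAt ℝ g x) :
    pd i (fun y => f y - g y) x = pd i f x - pd i g x := by
  simp [pd, fderiv_fun_sub hf hg]

lemma contDiff_pd {m n : WithTop ℕ∞} (hf : ContDiff ℝ n f) (hmn : m + 1 ≤ n) :
    ContDiff ℝ m (pd i f) :=
  (hf.fderiv_right hmn).clm_apply contDiff_const

lemma differentiable_pd (hf : ContDiff ℝ 2 f) : Differentiable ℝ (pd i f) :=
  (contDiff_pd (m := 1) i hf le_rfl).differentiable one_ne_zero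

lemma pd_comm (hf : ContDiff ℝ 2 f) (j : Fin 3) (x : Fin 3 → ℝ) :
    pd i (pd j f) x = pd j (pd i f) x := by
  have hd : DifferentiableAt ℝ (fderiv ℝ f) x :=
    ((hf.fderiv_right (m := 1) le_rfl).differentiable one_ne_zero).differentiableAt
  have hsnd : ∀ k l : Fin 3,
      pd k (pd l f) x = fderiv ℝ (fderiv ℝ f) x (Pi.single k 1) (Pi.single l 1) := by
    intro k l
    change fderiv ℝ (fun y => fderiv ℝ f y (Pi.single l 1)) x (Pi.single k 1) = _
    rw [fderiv_clm_apply hd (differentiableAt_const _)]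
    simp
  rw [hsnd, hsnd, hf.contDiffAt.isSymmSndFDerivAt (by simp [minSmoothness_of_isRCLikeNormedField])]

lemma grad_pd (hf : ContDiff ℝ 2 f) (x : Fin 3 → ℝ) :
    grad (pd i f) x = fun j => pd i (pd j f) x :=
  funext fun j => pd_comm j hf i x

end pd

def nambuBracket (φ f g : (Fin 3 → ℝ) → ℝ) (x : Fin 3 → ℝ) : ℝ :=
  triple (grad φ x) (grad f x) (grad g x)

section nambuBracket

variable {φ f g h : (Fin 3 → ℝ) → ℝ}

lemma nambuBracket_eq (φ f g : (Fin 3 → ℝ) → ℝ) :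
    nambuBracket φ f g = fun x =>
      pd 0 φ x * (pd 1 f x * pd 2 g x - pd 2 f x * pd 1 g x)
        + pd 1 φ x * (pd 2 f x * pd 0 g x - pd 0 f x * pd 2 g x)
        + pd 2 φ x * (pd 0 f x * pd 1 g x - pd 1 f x * pd 0 g x) :=
  funext fun _ => triple_eq _ _ _

lemma differentiable_nambuBracket (hφ : ContDiff ℝ 2 φ) (hf : ContDiff ℝ 2 f)
    (hg : ContDiff ℝ 2 g) : Differentiable ℝ (nambuBracket φ f g) := by
  have dφ := fun j => differentiable_pd j hφ
  have df := fun j => differentiable_pd j hf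
  have dg := fun j => differentiable_pd j hg
  rw [nambuBracket_eq]
  fun_prop

lemma pd_nambuBracket (hφ : ContDiff ℝ 2 φ) (hf : ContDiff ℝ 2 f) (hg : ContDiff ℝ 2 g)
    (i : Fin 3) (x : Fin 3 → ℝ) :
    pd i (nambuBracket φ f g) x = nambuBracket (pd i φ) f g x + nambuBracket φ (pd i f) g x
      + nambuBracket φ f (pd i g) x := by
  have dφ := fun j => differentiable_pd j hφ
  have df := fun j => differentiable_pd j hf
  have dg := fun j => differentiable_pd j hg
  rw [nambuBracket_eq φ f g]
  simp (disch := fun_prop) only [pd_fun_add, pd_fun_sub, pd_fun_mul]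
  simp only [nambuBracket, grad_pd i hφ, grad_pd i hf, grad_pd i hg, triple_eq, grad]
  ring

lemma nambuBracket_mul_left {a b : (Fin 3 → ℝ) → ℝ} {x : Fin 3 → ℝ}
    (ha : DifferentiableAt ℝ a x) (hb : DifferentiableAt ℝ b x) :
    nambuBracket φ (fun y => a y * b y) h x
      = a x * nambuBracket φ b h x + b x * nambuBracket φ a h x := by
  simp only [nambuBracket, triple_eq, grad, pd_fun_mul _ ha hb]
  ring

theorem nambuBracket_jacobi (hφ : ContDiff ℝ 2 φ) (hf : ContDiff ℝ 2 f) (hg : ContDiff ℝ 2 g)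
    (hh : ContDiff ℝ 2 h) (x : Fin 3 → ℝ) :
    nambuBracket φ (nambuBracket φ f g) h x + nambuBracket φ (nambuBracket φ g h) f x
      + nambuBracket φ (nambuBracket φ h f) g x = 0 := by
  simp only [nambuBracket, triple_eq, grad, pd_nambuBracket hφ hf hg, pd_nambuBracket hφ hg hh,
    pd_nambuBracket hφ hh hf, pd_comm 1 hφ 0, pd_comm 2 hφ 0, pd_comm 2 hφ 1, pd_comm 1 hf 0,
    pd_comm 2 hf 0, pd_comm 2 hf 1, pd_comm 1 hg 0, pd_comm 2 hg 0, pd_comm 2 hg 1,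
    pd_comm 1 hh 0, pd_comm 2 hh 0, pd_comm 2 hh 1]
  -- The Hessian terms of `f`, `g`, `h` cancel in pairs by symmetry; those of `φ` cancel since
  -- `∑_cyc ⟨p × q, H (r × a)⟩ = 0` for symmetric `H` (expand `a` in the basis `p, q, r`).
  ring

end nambuBracket

lemma pb_pb_eq {ψ φ f g h : (Fin 3 → ℝ) → ℝ} {x : Fin 3 → ℝ} (hψ : DifferentiableAt ℝ ψ x)
    (hφ : ContDiff ℝ 2 φ) (hf : ContDiff ℝ 2 f) (hg : ContDiff ℝ 2 g) :
    pb ψ φ (pb ψ φ f g) h x = ψ x * (ψ x * nambuBracket φ (nambuBracket φ f g) h x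
      + nambuBracket φ f g x * nambuBracket φ ψ h x) := by
  change ψ x * nambuBracket φ (fun y => ψ y * nambuBracket φ f g y) h x = _
  rw [nambuBracket_mul_left hψ (differentiable_nambuBracket hφ hf hg x)]

/-- **P = ψ∇φ defines a Poisson structure on ℝ³.**  For smooth ψ, φ the bracket
{f,g} = ψ·⟨∇φ, ∇f × ∇g⟩ satisfies the Jacobi identity for all smooth f, g, h. -/
theorem jacobi_of_psi_grad_phi
    (ψ φ : (Fin 3 → ℝ) → ℝ) (hψ : ContDiff ℝ ∞ ψ) (hφ : ContDiff ℝ ∞ φ) :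
    ∀ f g h : (Fin 3 → ℝ) → ℝ, ContDiff ℝ ∞ f → ContDiff ℝ ∞ g → ContDiff ℝ ∞ h →
      ∀ x, pb ψ φ (pb ψ φ f g) h x + pb ψ φ (pb ψ φ g h) f x
            + pb ψ φ (pb ψ φ h f) g x = 0 := by
  intro f g h hf hg hh x
  have hψx : DifferentiableAt ℝ ψ x := (hψ.differentiable (by simp)).differentiableAt
  replace hφ := contDiff_infty.mp hφ 2
  replace hf := contDiff_infty.mp hf 2
  replace hg := contDiff_infty.mp hg 2
  replace hh := contDiff_infty.mp hh 2
  have cyclic : nambuBracket φ f g x * nambuBracket φ ψ h x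
      + nambuBracket φ g h x * nambuBracket φ ψ f x
      + nambuBracket φ h f x * nambuBracket φ ψ g x = 0 :=
    triple_mul_triple_add_cyclic _ _ _ _ _
  rw [pb_pb_eq hψx hφ hf hg, pb_pb_eq hψx hφ hg hh, pb_pb_eq hψx hφ hh hf]
  linear_combination ψ x ^ 2 * nambuBracket_jacobi hφ hf hg hh x + ψ x * cyclic

end
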